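/- Let n₁ and n₂ = n₁ + k₂ be positive integers with k₂ < q^κ. Suppose there exists an index i ≥ 0 such that ε_{κ+i}(n₁) ≠ q - 1. Let i be the smallest such index. Then for all k > i, ε_{κ+k}(n₁) = ε_{κ+k}(n₂). -/

import Mathlib

/-- The `j`-th digit of `n` in base `q`. -/
def digit (q j n : ℕ) : ℕ := n / q ^ j % q

theorem digit_eq_of_div_pow_eq {q m j n n' : ℕ} (hmj : m ≤ j) (h : n / q ^ m = n' / q ^ m) :
    digit q j n = digit q j n' := by
  obtain ⟨l, rfl⟩ := Nat.exists_eq_add_of_le hmj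
  simp only [digit, pow_add, ← Nat.div_div_eq_div_mul, h]

theorem mod_pow_succ_add_lt {q j n k : ℕ} (hq : 0 < q) (hd : digit q j n ≠ q - 1)
    (hk : k < q ^ j) : n % q ^ (j + 1) + k < q ^ (j + 1) := by
  have hd' : digit q j n + 2 ≤ q := by
    have := Nat.mod_lt (n / q ^ j) hq
    unfold digit at hd ⊢
    omega
  have hr : n % q ^ j < q ^ j := Nat.mod_lt _ (pow_pos hq j)
  calc n % q ^ (j + 1) + k = n % q ^ j + k + q ^ j * digit q j n := by
        rw [Nat.mod_pow_succ, digit]; ring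
    _ < q ^ j * 2 + q ^ j * digit q j n := by omega
    _ = q ^ j * (digit q j n + 2) := by ring
    _ ≤ q ^ (j + 1) := by rw [pow_succ]; exact Nat.mul_le_mul_left _ hd'

/-- A carry out of the low `j` digits is absorbed by digit `j` unless that digit is `q - 1`. -/
theorem add_div_pow_succ_eq {q j n k : ℕ} (hq : 0 < q) (hd : digit q j n ≠ q - 1)
    (hk : k < q ^ j) : (n + k) / q ^ (j + 1) = n / q ^ (j + 1) := by
  have hk' : k < q ^ (j + 1) := hk.trans_le (Nat.pow_le_pow_right hq j.le_succ)
  have hmod := mod_pow_succ_add_lt hq hd hk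
  rw [Nat.add_div_eq_of_add_mod_lt (by rwa [Nat.mod_eq_of_lt hk']), Nat.div_eq_of_lt hk',
    add_zero]

theorem stmt_13_general (q κ : ℕ) (hq : 2 ≤ q)
    (n₁ n₂ k₂ : ℕ) (hk₂ : k₂ < q ^ κ) (hn₂ : n₂ = n₁ + k₂)
    (i : ℕ) (hdi : digit q (κ + i) n₁ ≠ q - 1) :
    ∀ k, i < k → digit q (κ + k) n₁ = digit q (κ + k) n₂ := by
  intro k hk
  have hq₀ : 0 < q := by omega
  have hk₂' : k₂ < q ^ (κ + i) := hk₂.trans_le (Nat.pow_le_pow_right hq₀ (by omega))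
  subst hn₂
  exact digit_eq_of_div_pow_eq (m := κ + i + 1) (by omega)
    (add_div_pow_succ_eq hq₀ hdi hk₂').symm

theorem stmt_13 (q κ : ℕ) (hq : 2 ≤ q)
    (n₁ n₂ k₂ : ℕ) (hn₁ : 1 ≤ n₁) (hk₂ : k₂ < q ^ κ) (hn₂ : n₂ = n₁ + k₂)
    (i : ℕ) (hdi : digit q (κ + i) n₁ ≠ q - 1)
    (hmin : ∀ m < i, digit q (κ + m) n₁ = q - 1) :
    ∀ k, i < k → digit q (κ + k) n₁ = digit q (κ + k) n₂ :=
  stmt_13_general q κ hq n₁ n₂ k₂ hk₂ hn₂ i hdi
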